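/- arXiv:2309.08618 — 2 statements merged into one kernel-verified Lean document; each statement's English description precedes it below -/
import Mathlib

section
/- For the yin-yang superpositioner, the set of value functions obtainable at node b₁ (by arbitrary finite sequences of reentry applications ending with reading node b₁, including the empty sequence) is exactly {b₁, b₁ ∧ b₂, b₁ ∧ ¬b₂, const 0}, and at node b₂ it is exactly {b₂, b₁ ⊕ b₂, ¬b₁ ∧ b₂}; hence there are exactly 7 intrinsic functions in total. -/
/-- Update map of node 1 of the yin-yang superpositioner: `b₁ ↦ b₁ ∧ b₂`. -/
def F1 : Bool × Bool → Bool × Bool := fun b => (b.1 && b.2, b.2)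

/-- Update map of node 2 of the yin-yang superpositioner: `b₂ ↦ b₁ ⊕ b₂`. -/
def F2 : Bool × Bool → Bool × Bool := fun b => (b.1, xor b.1 b.2)

/-- The composite map induced by a reentry configuration `S = (j₁, …, j_K)`,
namely `F_{j₁} ∘ ⋯ ∘ F_{j_K}` (empty configuration gives the identity). -/
def comp : List (Fin 2) → (Bool × Bool → Bool × Bool) :=
  fun S => S.foldr (fun j h => (if j = 0 then F1 else F2) ∘ h) id

/-- membership in the monoid generated by F1, F2 -/
def M (h : Bool × Bool → Bool × Bool) : Prop :=
  h = id ∨ h = F1 ∨ h = F2 ∨ h = F2 ∘ F1 ∨ h = F1 ∘ F2 ∨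
    h = F1 ∘ F2 ∘ F1 ∨ h = F2 ∘ F1 ∘ F2

lemma closure1 {h} (hh : M h) : M (F1 ∘ h) := by
  rcases hh with rfl | rfl | rfl | rfl | rfl | rfl | rfl <;> unfold M <;> decide

lemma closure2 {h} (hh : M h) : M (F2 ∘ h) := by
  rcases hh with rfl | rfl | rfl | rfl | rfl | rfl | rfl <;> unfold M <;> decide

lemma comp_mem : ∀ S : List (Fin 2), M (comp S) := by
  intro S
  induction S with
  | nil => left; rfl
  | cons j S ih =>
    have : comp (j :: S) = (if j = 0 then F1 else F2) ∘ comp S := rfl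
    rw [this]
    fin_cases j
    · simpa using closure1 ih
    · simpa using closure2 ih

/-- The value functions obtainable at node `b₁` are exactly
`{b₁, b₁ ∧ b₂, b₁ ∧ ¬b₂, 0}`, those at node `b₂` are exactly
`{b₂, b₁ ⊕ b₂, ¬b₁ ∧ b₂}`, hence there are exactly 7 intrinsic functions. -/
theorem stmt_2 :
    {g : Bool × Bool → Bool | ∃ S : List (Fin 2), g = fun b => (comp S b).1} =
      {fun b => b.1, fun b => b.1 && b.2, fun b => b.1 && !b.2, fun _ => false} ∧
    {g : Bool × Bool → Bool | ∃ S : List (Fin 2), g = fun b => (comp S b).2} =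
      {fun b => b.2, fun b => xor b.1 b.2, fun b => !b.1 && b.2} ∧
    ({g : Bool × Bool → Bool | ∃ S : List (Fin 2), g = fun b => (comp S b).1} ∪
      {g : Bool × Bool → Bool | ∃ S : List (Fin 2), g = fun b => (comp S b).2}).ncard = 7 := by
  have h1 : {g : Bool × Bool → Bool | ∃ S : List (Fin 2), g = fun b => (comp S b).1} =
      {fun b => b.1, fun b => b.1 && b.2, fun b => b.1 && !b.2, fun _ => false} := by
    ext g
    constructor
    · rintro ⟨S, rfl⟩
      have := comp_mem S
      rcases this with h | h | h | h | h | h | h <;> rw [h] <;>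
        simp only [Set.mem_insert_iff, Set.mem_singleton_iff] <;>
        decide
    · rintro (rfl | rfl | rfl | rfl)
      · exact ⟨[], rfl⟩
      · exact ⟨[0], by funext b; rcases b with ⟨x, y⟩; cases x <;> cases y <;> rfl⟩
      · exact ⟨[1, 0, 1], by funext b; rcases b with ⟨x, y⟩; cases x <;> cases y <;> rfl⟩
      · exact ⟨[0, 1, 0], by funext b; rcases b with ⟨x, y⟩; cases x <;> cases y <;> rfl⟩
  have h2 : {g : Bool × Bool → Bool | ∃ S : List (Fin 2), g = fun b => (comp S b).2} =
      {fun b => b.2, fun b => xor b.1 b.2, fun b => !b.1 && b.2} := by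
    ext g
    constructor
    · rintro ⟨S, rfl⟩
      have := comp_mem S
      rcases this with h | h | h | h | h | h | h <;> rw [h] <;>
        simp only [Set.mem_insert_iff, Set.mem_singleton_iff] <;>
        decide
    · rintro (rfl | rfl | rfl)
      · exact ⟨[], rfl⟩
      · exact ⟨[1], by funext b; rcases b with ⟨x, y⟩; cases x <;> cases y <;> rfl⟩
      · exact ⟨[1, 0], by funext b; rcases b with ⟨x, y⟩; cases x <;> cases y <;> rfl⟩
  refine ⟨h1, h2, ?_⟩
  rw [h1, h2]
  have hu : ({fun b => b.1, fun b => b.1 && b.2, fun b => b.1 && !b.2, fun _ => false} ∪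
      {fun b => b.2, fun b => xor b.1 b.2, fun b => !b.1 && b.2} : Set (Bool × Bool → Bool)) =
      ↑({fun b => b.1, fun b => b.1 && b.2, fun b => b.1 && !b.2, fun _ => false,
        fun b => b.2, fun b => xor b.1 b.2, fun b => !b.1 && b.2} :
        Finset (Bool × Bool → Bool)) := by
    ext g
    simp [Set.mem_union, Set.mem_insert_iff]
    tauto
  rw [hu, Set.ncard_coe_finset]
  decide
end

section
/- The yin-yang superpositioner has exactly 7 distinct intrinsic functions, while the total number of Boolean functions B² → B is 16; hence the intrinsic functions form a proper subset of all two-variable Boolean functions. -/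
set_option maxRecDepth 4000

/-- All intrinsic functions of the yin-yang superpositioner: the coordinate
functions of all composites of update maps (including projections). -/
def intrinsic : Set (Bool × Bool → Bool) :=
  {g | ∃ S : List (Fin 2), g = (fun b => (comp S b).1) ∨ g = (fun b => (comp S b).2)}

def Mf : Finset (Bool × Bool → Bool × Bool) :=
  {id, F1, F2, F1 ∘ F2, F2 ∘ F1 ∘ F2, F1 ∘ F2 ∘ F1 ∘ F2, F2 ∘ F1}

def Gf : Finset (Bool × Bool → Bool) :=
  {fun b => b.1, fun b => b.2, fun b => b.1 && b.2, fun b => xor b.1 b.2,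
   fun b => b.1 && !b.2, fun b => !b.1 && b.2, fun _ => false}

lemma clos : ∀ m ∈ Mf, F1 ∘ m ∈ Mf ∧ F2 ∘ m ∈ Mf := by decide

lemma comp_mem_s3 : ∀ S, comp S ∈ Mf := by
  intro S
  induction S with
  | nil => exact Finset.mem_insert_self _ _
  | cons j S ih =>
    have h : comp (j :: S) = (if j = 0 then F1 else F2) ∘ comp S := rfl
    rw [h]
    rcases (clos _ ih) with ⟨h1, h2⟩
    by_cases hj : j = 0 <;> simp [hj, h1, h2]

lemma coords_mem : ∀ m ∈ Mf, (fun b => (m b).1) ∈ Gf ∧ (fun b => (m b).2) ∈ Gf := by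
  decide

lemma intrinsic_eq : intrinsic = ↑Gf := by
  ext g
  constructor
  · rintro ⟨S, hg | hg⟩ <;> subst hg
    · exact (coords_mem _ (comp_mem_s3 S)).1
    · exact (coords_mem _ (comp_mem_s3 S)).2
  · intro hg
    simp only [Gf, Finset.coe_insert, Set.mem_insert_iff, Finset.mem_insert,
      Finset.coe_singleton, Set.mem_singleton_iff] at hg
    rcases hg with h | h | h | h | h | h | h <;> subst h
    · exact ⟨[], Or.inl rfl⟩
    · exact ⟨[], Or.inr rfl⟩
    · exact ⟨[0], Or.inl (by funext b; rcases b with ⟨a, c⟩; rcases a <;> rcases c <;> rfl)⟩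
    · exact ⟨[1], Or.inr (by funext b; rcases b with ⟨a, c⟩; rcases a <;> rcases c <;> rfl)⟩
    · exact ⟨[0,1], Or.inl (by funext b; rcases b with ⟨a, c⟩; rcases a <;> rcases c <;> rfl)⟩
    · exact ⟨[1,0,1], Or.inr (by funext b; rcases b with ⟨a, c⟩; rcases a <;> rcases c <;> rfl)⟩
    · exact ⟨[0,1,0,1], Or.inl (by funext b; rcases b with ⟨a, c⟩; rcases a <;> rcases c <;> rfl)⟩

/-- The yin-yang superpositioner has exactly 7 intrinsic functions, while there
are 16 Boolean functions `B² → B`; hence the intrinsic functions form a proper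
subset of all two-variable Boolean functions. -/
theorem stmt_3 :
    intrinsic.ncard = 7 ∧ Fintype.card (Bool × Bool → Bool) = 16 ∧
      intrinsic ⊂ Set.univ := by
  refine ⟨?_, by decide, ?_⟩
  · rw [intrinsic_eq, Set.ncard_coe_finset]
    decide
  · rw [intrinsic_eq]
    refine ⟨Set.subset_univ _, fun h => ?_⟩
    have : (fun _ => true : Bool × Bool → Bool) ∈ (↑Gf : Set _) := h (Set.mem_univ _)
    revert this
    decide
end
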